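/- For all finite lists of propositional variables Δ₁, Δ₂ and every children list Γ, the modal trees ⟨Δ₁⌢Δ₂;Γ⟩ and ⟨Δ₂⌢Δ₁;Γ⟩ are TRC-equivalent: ⟨Δ₁⌢Δ₂;Γ⟩ ↔* ⟨Δ₂⌢Δ₁;Γ⟩. -/

import Mathlib

namespace TRC

/-- Strictly positive formulas of `L⁺`. -/
inductive SPF : Type where
  | top : SPF
  | var : ℕ → SPF
  | dia : ℕ → SPF → SPF
  | and : SPF → SPF → SPF

/-- The sequent system `K⁺`. -/
inductive KPlus : SPF → SPF → Prop where
  | id (φ) : KPlus φ φ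
  | topI (φ) : KPlus φ .top
  | cut {φ ψ χ} : KPlus φ ψ → KPlus ψ χ → KPlus φ χ
  | andE₁ (φ ψ) : KPlus (.and φ ψ) φ
  | andE₂ (φ ψ) : KPlus (.and φ ψ) ψ
  | andI {φ ψ χ} : KPlus φ ψ → KPlus φ χ → KPlus φ (.and ψ χ)
  | dist {φ ψ} (α) : KPlus φ ψ → KPlus (.dia α φ) (.dia α ψ)

/-- The Reflection Calculus `RC`. -/
inductive RC : SPF → SPF → Prop where
  | id (φ) : RC φ φ
  | topI (φ) : RC φ .top
  | cut {φ ψ χ} : RC φ ψ → RC ψ χ → RC φ χ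
  | andE₁ (φ ψ) : RC (.and φ ψ) φ
  | andE₂ (φ ψ) : RC (.and φ ψ) ψ
  | andI {φ ψ χ} : RC φ ψ → RC φ χ → RC φ (.and ψ χ)
  | dist {φ ψ} (α) : RC φ ψ → RC (.dia α φ) (.dia α ψ)
  | trans (α φ) : RC (.dia α (.dia α φ)) (.dia α φ)
  | mono {α β} (φ) : β < α → RC (.dia α φ) (.dia β φ)
  | jax {α β} (φ ψ) : β < α → RC (.and (.dia α φ) (.dia β ψ)) (.dia α (.and φ (.dia β ψ)))

/-- Modal depth. -/
def SPF.md : SPF → ℕ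
  | .top => 0
  | .var _ => 0
  | .dia _ φ => φ.md + 1
  | .and φ ψ => max φ.md ψ.md

/-- Modal trees. -/
inductive MTree : Type where
  | node : List ℕ → List (ℕ × MTree) → MTree

/-- Sum of modal trees. -/
def MTree.sum : MTree → MTree → MTree
  | .node Δ₁ Γ₁, .node Δ₂ Γ₂ => .node (Δ₁ ++ Δ₂) (Γ₁ ++ Γ₂)

mutual
/-- Height of a modal tree. -/
def MTree.height : MTree → ℕ
  | .node _ Γ => heightL Γ
def heightL : List (ℕ × MTree) → ℕ
  | [] => 0
  | (_, S) :: Γ => max (S.height + 1) (heightL Γ)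
end

mutual
/-- `T.IsPos k`: the (1-indexed) string `k` is a position of `T`. -/
def MTree.IsPos : MTree → List ℕ → Prop
  | _, [] => True
  | .node _ Γ, i :: k => isPosL Γ i k
def isPosL : List (ℕ × MTree) → ℕ → List ℕ → Prop
  | [], _, _ => False
  | _ :: _, 0, _ => False
  | (_, S) :: _, 1, k => S.IsPos k
  | _ :: Γ, n+2, k => isPosL Γ (n+1) k
end

mutual
/-- Subtree of `T` at position `k` (returning a default junk value off positions). -/
def MTree.subtree : MTree → List ℕ → MTree
  | T, [] => T
  | .node Δ Γ, i :: k => subtreeL (.node Δ Γ) Γ i k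
def subtreeL : MTree → List (ℕ × MTree) → ℕ → List ℕ → MTree
  | d, [], _, _ => d
  | d, _ :: _, 0, _ => d
  | _, (_, S) :: _, 1, k => S.subtree k
  | d, _ :: Γ, n+2, k => subtreeL d Γ (n+1) k
end

mutual
/-- `T.replace S k`: replace the subtree of `T` at position `k` by `S`. -/
def MTree.replace : MTree → MTree → List ℕ → MTree
  | _, S, [] => S
  | .node Δ Γ, S, i :: k => .node Δ (replaceL Γ S i k)
def replaceL : List (ℕ × MTree) → MTree → ℕ → List ℕ → List (ℕ × MTree)
  | [], _, _, _ => []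
  | Γ, _, 0, _ => Γ
  | (α, C) :: Γ, S, 1, k => (α, C.replace S k) :: Γ
  | x :: Γ, S, n+2, k => x :: replaceL Γ S (n+1) k
end

/-- Names of the eight rewriting rules of TRC. -/
inductive Rule : Type where
  | rhoP | rhoM | sigma | piP | piM | four | lam | jay
  deriving DecidableEq

/-- One rewriting step performed at the root. -/
inductive RootStep : Rule → MTree → MTree → Prop where
  | rhoP {Δ Γ i p} (hi : 1 ≤ i) (h : Δ[i-1]? = some p) :
      RootStep .rhoP (.node Δ Γ) (.node (p :: Δ) Γ)
  | rhoM {Δ Γ i} (hi : 1 ≤ i) (h : i - 1 < Δ.length) :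
      RootStep .rhoM (.node Δ Γ) (.node (Δ.eraseIdx (i-1)) Γ)
  | sigma {Δ Γ i j x y} (hi : 1 ≤ i) (hj : 1 ≤ j) (hij : i ≠ j)
      (hx : Γ[i-1]? = some x) (hy : Γ[j-1]? = some y) :
      RootStep .sigma (.node Δ Γ) (.node Δ ((Γ.set (j-1) x).set (i-1) y))
  | piP {Δ Γ i x} (hi : 1 ≤ i) (hx : Γ[i-1]? = some x) :
      RootStep .piP (.node Δ Γ) (.node Δ (x :: Γ))
  | piM {Δ Γ i} (hi : 1 ≤ i) (h : i - 1 < Γ.length) :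
      RootStep .piM (.node Δ Γ) (.node Δ (Γ.eraseIdx (i-1)))
  | four {Δ Γ i j β Δt Γt S} (hi : 1 ≤ i) (hj : 1 ≤ j)
      (hΓ : Γ[i-1]? = some (β, MTree.node Δt Γt)) (hΓt : Γt[j-1]? = some (β, S)) :
      RootStep .four (.node Δ Γ) (.node Δ (Γ.set (i-1) (β, S)))
  | lam {Δ Γ i α β S} (hi : 1 ≤ i) (hβ : β < α) (hΓ : Γ[i-1]? = some (α, S)) :
      RootStep .lam (.node Δ Γ) (.node Δ (Γ.set (i-1) (β, S)))
  | jay {Δ Γ i j α β Δt Γt S} (hi : 1 ≤ i) (hj : 1 ≤ j) (hij : i ≠ j) (hβ : β < α)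
      (hΓi : Γ[i-1]? = some (α, MTree.node Δt Γt)) (hΓj : Γ[j-1]? = some (β, S)) :
      RootStep .jay (.node Δ Γ)
        (.node Δ ((Γ.set (i-1) (α, MTree.node Δt (Γt ++ [(β, S)]))).eraseIdx (j-1)))

/-- One step of the rule `r`, applied at some position. -/
def StepR (r : Rule) (T T' : MTree) : Prop :=
  ∃ k S, T.IsPos k ∧ RootStep r (T.subtree k) S ∧ T' = T.replace S k

/-- One step of the rewriting relation `↪`. -/
def Step (T T' : MTree) : Prop := ∃ r, StepR r T T'

/-- The rewriting relation `↪*`. -/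
def Steps : MTree → MTree → Prop := Relation.ReflTransGen Step

/-- TRC-equivalence `↔*`. -/
def TEquiv (T T' : MTree) : Prop := Steps T T' ∧ Steps T' T

/-- `T ↪^Ω S` : rewriting applying the rules of `Ω` in order, one step each. -/
inductive StepsOf : List Rule → MTree → MTree → Prop where
  | nil (T) : StepsOf [] T T
  | cons {r Ω T U S} : StepR r T U → StepsOf Ω U S → StepsOf (r :: Ω) T S

def AtomicStep (T S : MTree) : Prop := StepR .rhoP T S ∨ StepR .rhoM T S
def DecreasingStep (T S : MTree) : Prop := StepR .piM T S ∨ StepR .four T S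
def ModalStep (T S : MTree) : Prop := StepR .lam T S ∨ StepR .jay T S

/-- Finite conjunctions (empty conjunction is `⊤`). -/
def bigAnd : List SPF → SPF
  | [] => .top
  | φ :: l => .and φ (bigAnd l)

mutual
/-- The embedding `ℱ` of modal trees into formulas. -/
def MTree.toFormula : MTree → SPF
  | .node Δ Γ => .and (bigAnd (Δ.map SPF.var)) (diamL Γ)
def diamL : List (ℕ × MTree) → SPF
  | [] => .top
  | (α, S) :: Γ => .and (.dia α S.toFormula) (diamL Γ)
end

/-- The embedding `𝒯` of formulas into modal trees. -/
def SPF.toTree : SPF → MTree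
  | .top => .node [] []
  | .var p => .node [p] []
  | .dia α φ => .node [] [(α, φ.toTree)]
  | .and φ ψ => φ.toTree.sum ψ.toTree

/-- Nonempty conjunction `φ₁ ∧ (φ₂ ∧ (… ∧ φₙ))`. -/
def conjNE : SPF → List SPF → SPF
  | φ, [] => φ
  | φ, ψ :: l => .and φ (conjNE ψ l)

end TRC

/-!
With `ρ⁺` any atom of the root label can be copied to its front, and with `ρ⁻` any atom can
be erased. Hence `⟨Δ;Γ⟩ ↪* ⟨Δ'⌢Δ;Γ⟩ ↪* ⟨Δ';Γ⟩` whenever every atom of `Δ'` occurs in `Δ`,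
and `Δ₁⌢Δ₂`, `Δ₂⌢Δ₁` contain the same atoms.
-/

namespace TRC

theorem Step.of_rootStep {r : Rule} {T S : MTree} (h : RootStep r T S) : Step T S :=
  ⟨r, [], S, by simp [MTree.IsPos], by simpa [MTree.subtree] using h,
    by simp [MTree.replace]⟩

theorem Steps.node_prepend_of_subset {Δ' Δ : List ℕ} (Γ : List (ℕ × MTree)) (h : Δ' ⊆ Δ) :
    Steps (.node Δ Γ) (.node (Δ' ++ Δ) Γ) := by
  induction Δ' with
  | nil => exact .refl
  | cons p Δ' ih =>
    refine .tail (ih (List.subset_of_cons_subset h)) ?_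
    obtain ⟨i, hi⟩ := List.mem_iff_getElem?.mp (List.mem_append_right Δ' (h List.mem_cons_self))
    exact .of_rootStep (RootStep.rhoP (i := i + 1) (by omega) (by simpa using hi))

theorem Steps.node_append_drop_right (Δ' Δ : List ℕ) (Γ : List (ℕ × MTree)) :
    Steps (.node (Δ' ++ Δ) Γ) (.node Δ' Γ) := by
  induction Δ with
  | nil => rw [List.append_nil]; exact .refl
  | cons p Δ ih =>
    refine .head ?_ ih
    have h :=
      RootStep.rhoM (Δ := Δ' ++ p :: Δ) (Γ := Γ) (i := Δ'.length + 1) (by omega) (by simp)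
    simpa [List.eraseIdx_append_of_length_le le_rfl] using Step.of_rootStep h

theorem Steps.node_of_subset {Δ' Δ : List ℕ} (Γ : List (ℕ × MTree)) (h : Δ' ⊆ Δ) :
    Steps (.node Δ Γ) (.node Δ' Γ) :=
  (node_prepend_of_subset Γ h).trans (node_append_drop_right Δ' Δ Γ)

end TRC

/-- `⟨Δ₁⌢Δ₂;Γ⟩ ↔* ⟨Δ₂⌢Δ₁;Γ⟩`. -/
theorem root_label_permutation (Δ₁ Δ₂ : List ℕ) (Γ : List (ℕ × TRC.MTree)) :
    TRC.TEquiv (.node (Δ₁ ++ Δ₂) Γ) (.node (Δ₂ ++ Δ₁) Γ) :=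
  ⟨.node_of_subset Γ List.perm_append_comm.subset,
    .node_of_subset Γ List.perm_append_comm.subset⟩
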